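/- Let (C_q, d_q)_{0≤q≤N} be a cochain complex of finite-dimensional complex inner product spaces with Laplacians Δ_q, and let f : ℝ → ℝ be a continuous function. Then Σ_{q=0}^N (−1)^q Tr(f(Δ_q)) = f(0) · Σ_{q=0}^N (−1)^q dim_ℂ C_q, where f(Δ_q) is defined by the continuous functional calculus for the selfadjoint operator Δ_q and Tr denotes the trace. -/
import Mathlib


noncomputable section

open LinearMap

/-- A cochain complex of finite-dimensional complex inner product spaces,
supported in degrees `0, …, N` (the spaces in degrees `> N` are trivial). -/
structure FinComplex (N : ℕ) where
  /-- the spaces of the complex -/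
  C : ℕ → Type
  [normed : ∀ q, NormedAddCommGroup (C q)]
  [ipspace : ∀ q, InnerProductSpace ℂ (C q)]
  [findim : ∀ q, FiniteDimensional ℂ (C q)]
  /-- the differentials -/
  d : ∀ q, C q →ₗ[ℂ] C (q + 1)
  dd : ∀ q, (d (q + 1)).comp (d q) = 0
  trivial_beyond : ∀ q, N < q → ∀ x : C q, x = 0

attribute [instance] FinComplex.normed FinComplex.ipspace FinComplex.findim

namespace FinComplex

variable {N : ℕ}

/-- The Laplacians `Δ_q = d_q^* d_q + d_{q-1} d_{q-1}^*` (no second term for `q = 0`). -/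
def lap (X : FinComplex N) : ∀ q, X.C q →ₗ[ℂ] X.C q
  | 0 => (LinearMap.adjoint (X.d 0)).comp (X.d 0)
  | (q + 1) =>
      (LinearMap.adjoint (X.d (q + 1))).comp (X.d (q + 1)) +
        (X.d q).comp (LinearMap.adjoint (X.d q))

/-- Acyclicity: `ker d_q = range d_{q-1}` for every `q` (for `q = 0` this reads `ker d_0 = 0`). -/
def Acyclic (X : FinComplex N) : Prop :=
  LinearMap.ker (X.d 0) = ⊥ ∧
    ∀ q, LinearMap.ker (X.d (q + 1)) = LinearMap.range (X.d q)

/-- `log T(C) = (1/2) * Σ_q (-1)^(q+1) * q * log det Δ_q`. -/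
def logT (X : FinComplex N) : ℝ :=
  (1 / 2) * ∑ q ∈ Finset.range (N + 1),
      (-1 : ℝ) ^ (q + 1) * (q : ℝ) * Real.log ((LinearMap.det (X.lap q)).re)

/-- Morphism of cochain complexes. -/
def IsMorphism (X Y : FinComplex N) (f : ∀ q, X.C q →ₗ[ℂ] Y.C q) : Prop :=
  ∀ q x, f (q + 1) (X.d q x) = Y.d q (f q x)

/-- `f` induces an isomorphism in cohomology
(`ker d_q / range d_{q-1} → ker d'_q / range d'_{q-1}` is bijective for all `q`). -/
def InducesCohomologyIso (X Y : FinComplex N) (f : ∀ q, X.C q →ₗ[ℂ] Y.C q) : Prop :=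
  (∀ x : X.C 0, X.d 0 x = 0 → f 0 x = 0 → x = 0) ∧
  (∀ y : Y.C 0, Y.d 0 y = 0 → ∃ x : X.C 0, X.d 0 x = 0 ∧ f 0 x = y) ∧
  (∀ q, ∀ x : X.C (q + 1), X.d (q + 1) x = 0 →
      (∃ v, Y.d q v = f (q + 1) x) → ∃ u, X.d q u = x) ∧
  (∀ q, ∀ y : Y.C (q + 1), Y.d (q + 1) y = 0 →
      ∃ x : X.C (q + 1), X.d (q + 1) x = 0 ∧ ∃ v, y - f (q + 1) x = Y.d q v)

/-- Data identifying `Z` with the mapping cone of `f : X → Y`: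
`Z_k = Y_{k-1} ⊕ X_k` (orthogonal direct sum) with differential
`d(f)_k (v, u) = (-d_Y v + f u, d_X u)`. -/
structure ConeIso (X Y : FinComplex N) (f : ∀ q, X.C q →ₗ[ℂ] Y.C q)
    (Z : FinComplex (N + 1)) where
  e0 : X.C 0 ≃ₗᵢ[ℂ] Z.C 0
  e : ∀ q, WithLp 2 (Y.C q × X.C (q + 1)) ≃ₗᵢ[ℂ] Z.C (q + 1)
  compat0 : ∀ u : X.C 0,
    Z.d 0 (e0 u) = e 0 ((WithLp.equiv 2 (Y.C 0 × X.C 1)).symm (f 0 u, X.d 0 u))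
  compat : ∀ q (v : Y.C q) (u : X.C (q + 1)),
    Z.d (q + 1) (e q ((WithLp.equiv 2 (Y.C q × X.C (q + 1))).symm (v, u))) =
      e (q + 1) ((WithLp.equiv 2 (Y.C (q + 1) × X.C (q + 2))).symm
        (-(Y.d q v) + f (q + 1) u, X.d (q + 1) u))

end FinComplex

/-- `log vol(g) = (1/2) log det (g^* g)` for a linear map between finite-dimensional
complex inner product spaces. -/
def logvol {E F : Type} [NormedAddCommGroup E] [InnerProductSpace ℂ E] [FiniteDimensional ℂ E]
    [NormedAddCommGroup F] [InnerProductSpace ℂ F] [FiniteDimensional ℂ F]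
    (g : E →ₗ[ℂ] F) : ℝ :=
  (1 / 2) * Real.log ((LinearMap.det ((LinearMap.adjoint g).comp g)).re)


section AuxSupersymmetry

/-- In a ring, if `a * b = 0 = b * a` then `(a + b) ^ (n+1) = a ^ (n+1) + b ^ (n+1)`. -/
lemma pow_add_of_mul_eq_zero' {A : Type*} [Ring A] {a b : A} (hab : a * b = 0)
    (hba : b * a = 0) (n : ℕ) : (a + b) ^ (n + 1) = a ^ (n + 1) + b ^ (n + 1) := by
  induction n with
  | zero => simp
  | succ n ih =>
    have h1 : a ^ (n + 1) * b = 0 := by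
      rw [pow_succ, mul_assoc, hab, mul_zero]
    have h2 : b ^ (n + 1) * a = 0 := by
      rw [pow_succ, mul_assoc, hba, mul_zero]
    calc (a + b) ^ (n + 1 + 1) = (a ^ (n + 1) + b ^ (n + 1)) * (a + b) := by
          rw [pow_succ, ih]
      _ = a ^ (n + 1 + 1) + b ^ (n + 1 + 1) := by
          rw [add_mul, mul_add, mul_add, h1, h2, ← pow_succ, ← pow_succ]
          abel

variable {E F : Type} [NormedAddCommGroup E] [InnerProductSpace ℂ E] [FiniteDimensional ℂ E]
  [NormedAddCommGroup F] [InnerProductSpace ℂ F] [FiniteDimensional ℂ F]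

lemma ddadj_pow_eq (d : E →ₗ[ℂ] F) (n : ℕ) :
    (d ∘ₗ LinearMap.adjoint d) ^ (n + 1) =
      d ∘ₗ (((LinearMap.adjoint d ∘ₗ d) ^ n) ∘ₗ LinearMap.adjoint d) := by
  induction n with
  | zero => simp [Module.End.one_eq_id]
  | succ n ih =>
    rw [pow_succ, ih, pow_succ, Module.End.mul_eq_comp, Module.End.mul_eq_comp]
    simp only [LinearMap.comp_assoc]

lemma trace_ddadj_pow (d : E →ₗ[ℂ] F) (n : ℕ) :
    LinearMap.trace ℂ F ((d ∘ₗ LinearMap.adjoint d) ^ (n + 1)) =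
      LinearMap.trace ℂ E ((LinearMap.adjoint d ∘ₗ d) ^ (n + 1)) := by
  rw [ddadj_pow_eq, LinearMap.trace_comp_comm', pow_succ, Module.End.mul_eq_comp]
  simp only [LinearMap.comp_assoc]

lemma isSymmetric_adjoint_comp (d : E →ₗ[ℂ] F) :
    (LinearMap.adjoint d ∘ₗ d).IsSymmetric := fun x y => by
  simp only [LinearMap.comp_apply, LinearMap.adjoint_inner_left, LinearMap.adjoint_inner_right]

end AuxSupersymmetry

namespace FinComplex

variable {N : ℕ}

lemma lap_zero (X : FinComplex N) :
    X.lap 0 = LinearMap.adjoint (X.d 0) ∘ₗ X.d 0 := rfl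

lemma lap_succ (X : FinComplex N) (q : ℕ) :
    X.lap (q + 1) =
      LinearMap.adjoint (X.d (q + 1)) ∘ₗ X.d (q + 1) + X.d q ∘ₗ LinearMap.adjoint (X.d q) := rfl

lemma lap_isSymmetric (X : FinComplex N) (q : ℕ) : (X.lap q).IsSymmetric := by
  cases q with
  | zero => exact isSymmetric_adjoint_comp (X.d 0)
  | succ q =>
    rw [lap_succ]
    refine (isSymmetric_adjoint_comp (X.d (q + 1))).add ?_
    have h := isSymmetric_adjoint_comp (LinearMap.adjoint (X.d q))
    rwa [LinearMap.adjoint_adjoint] at h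

lemma d_last (X : FinComplex N) : X.d N = 0 := by
  ext x
  exact X.trivial_beyond (N + 1) (lt_add_one N) _

/-- The key algebraic cancellation: for `n ≥ 1`,
`Σ_q (-1)^q Tr (Δ_q ^ n) = 0`. -/
lemma alternating_trace_lap_pow (X : FinComplex N) (n : ℕ) :
    ∑ q ∈ Finset.range (N + 1),
      (-1 : ℂ) ^ q * LinearMap.trace ℂ (X.C q) ((X.lap q) ^ (n + 1)) = 0 := by
  set u : ℕ → ℂ := fun q =>
    LinearMap.trace ℂ (X.C q) ((LinearMap.adjoint (X.d q) ∘ₗ X.d q) ^ (n + 1)) with hu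
  have key : ∀ q, LinearMap.trace ℂ (X.C (q + 1)) ((X.lap (q + 1)) ^ (n + 1)) =
      u (q + 1) + u q := by
    intro q
    have hab : (LinearMap.adjoint (X.d (q + 1)) ∘ₗ X.d (q + 1)) *
        (X.d q ∘ₗ LinearMap.adjoint (X.d q)) = 0 := by
      rw [Module.End.mul_eq_comp]
      calc (LinearMap.adjoint (X.d (q + 1)) ∘ₗ X.d (q + 1)) ∘ₗ
            (X.d q ∘ₗ LinearMap.adjoint (X.d q))
          = LinearMap.adjoint (X.d (q + 1)) ∘ₗ
              (((X.d (q + 1)) ∘ₗ X.d q) ∘ₗ LinearMap.adjoint (X.d q)) := by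
            simp only [LinearMap.comp_assoc]
        _ = 0 := by rw [X.dd q]; simp
    have hba : (X.d q ∘ₗ LinearMap.adjoint (X.d q)) *
        (LinearMap.adjoint (X.d (q + 1)) ∘ₗ X.d (q + 1)) = 0 := by
      rw [Module.End.mul_eq_comp]
      have hadj : LinearMap.adjoint (X.d q) ∘ₗ LinearMap.adjoint (X.d (q + 1)) = 0 := by
        rw [← LinearMap.adjoint_comp, X.dd q, map_zero]
      calc (X.d q ∘ₗ LinearMap.adjoint (X.d q)) ∘ₗ
            (LinearMap.adjoint (X.d (q + 1)) ∘ₗ X.d (q + 1))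
          = X.d q ∘ₗ ((LinearMap.adjoint (X.d q) ∘ₗ LinearMap.adjoint (X.d (q + 1))) ∘ₗ
              X.d (q + 1)) := by simp only [LinearMap.comp_assoc]
        _ = 0 := by rw [hadj]; simp
    rw [lap_succ, pow_add_of_mul_eq_zero' hab hba, map_add, trace_ddadj_pow]
  have huN : u N = 0 := by
    rw [hu]
    simp only [X.d_last, map_zero, LinearMap.comp_zero]
    rw [zero_pow (Nat.succ_ne_zero n), map_zero]
  set g : ℕ → ℂ := fun q => (-1 : ℂ) ^ q * u q with hg
  have hterm : ∀ q ∈ Finset.range N,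
      (-1 : ℂ) ^ (q + 1) * LinearMap.trace ℂ (X.C (q + 1)) ((X.lap (q + 1)) ^ (n + 1)) =
        g (q + 1) - g q := by
    intro q _
    rw [key q, hg]
    simp only
    ring
  rw [Finset.sum_range_succ']
  rw [Finset.sum_congr rfl hterm, Finset.sum_range_sub g]
  have h0 : (-1 : ℂ) ^ (0 : ℕ) * LinearMap.trace ℂ (X.C 0) ((X.lap 0) ^ (n + 1)) = g 0 := by
    rw [lap_zero, hg]
  rw [h0, hg]
  simp [huN]

end FinComplex

section PolyVersion

open FinComplex

variable {N : ℕ}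

/-- The identity for polynomials. -/
lemma alternating_trace_aeval (X : FinComplex N) (p : Polynomial ℝ) :
    ∑ q ∈ Finset.range (N + 1), (-1 : ℂ) ^ q *
        LinearMap.trace ℂ (X.C q)
          ((Polynomial.aeval (LinearMap.toContinuousLinearMap (X.lap q)) p).toLinearMap) =
      ((Polynomial.eval 0 p : ℝ) : ℂ) *
        ∑ q ∈ Finset.range (N + 1), (-1 : ℂ) ^ q * (Module.finrank ℂ (X.C q) : ℂ) := by
  induction p using Polynomial.induction_on' with
  | add p₁ p₂ hp₁ hp₂ =>
    simp only [map_add, ContinuousLinearMap.coe_add, mul_add, Finset.sum_add_distrib, hp₁, hp₂,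
      Polynomial.eval_add, Complex.ofReal_add, add_mul]
  | monomial m c =>
    have haeval : ∀ q : ℕ,
        ((Polynomial.aeval (LinearMap.toContinuousLinearMap (X.lap q))
            (Polynomial.monomial m c)).toLinearMap) = c • ((X.lap q) ^ m) := by
      intro q
      rw [Polynomial.aeval_monomial, ← Algebra.smul_def]
      have hpow : (((LinearMap.toContinuousLinearMap (X.lap q)) ^ m :
          X.C q →L[ℂ] X.C q) : X.C q →ₗ[ℂ] X.C q) =
            ((LinearMap.toContinuousLinearMap (X.lap q) :
              X.C q →ₗ[ℂ] X.C q) ^ m) :=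
        map_pow (ContinuousLinearMap.toLinearMapRingHom) _ m
      rw [ContinuousLinearMap.coe_smul, hpow, LinearMap.coe_toContinuousLinearMap]
    have htrace : ∀ q : ℕ,
        LinearMap.trace ℂ (X.C q) (c • ((X.lap q) ^ m)) =
          (c : ℂ) * LinearMap.trace ℂ (X.C q) ((X.lap q) ^ m) := by
      intro q
      rw [← algebraMap_smul ℂ c ((X.lap q) ^ m), map_smul, Complex.coe_algebraMap,
        smul_eq_mul]
    simp only [haeval, htrace]
    cases m with
    | zero =>
      simp only [pow_zero, LinearMap.trace_one, Polynomial.eval_monomial, mul_one,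
        Finset.mul_sum]
      exact Finset.sum_congr rfl fun q _ => by ring
    | succ m =>
      have := X.alternating_trace_lap_pow m
      calc ∑ q ∈ Finset.range (N + 1), (-1 : ℂ) ^ q *
              ((c : ℂ) * LinearMap.trace ℂ (X.C q) ((X.lap q) ^ (m + 1)))
          = (c : ℂ) * ∑ q ∈ Finset.range (N + 1), (-1 : ℂ) ^ q *
              LinearMap.trace ℂ (X.C q) ((X.lap q) ^ (m + 1)) := by
            rw [Finset.mul_sum]; exact Finset.sum_congr rfl fun q _ => by ring
        _ = 0 := by rw [this, mul_zero]
        _ = ((Polynomial.eval 0 (Polynomial.monomial (m + 1) c) : ℝ) : ℂ) * _ := by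
            rw [Polynomial.eval_monomial, zero_pow (Nat.succ_ne_zero m), mul_zero]
            simp
  
/-- The continuous linear maps on a finite-dimensional space are algebra-isomorphic to
the linear maps. -/
noncomputable def clmAlgEquiv (E : Type) [NormedAddCommGroup E] [InnerProductSpace ℂ E]
    [FiniteDimensional ℂ E] : (E →L[ℂ] E) ≃ₐ[ℂ] Module.End ℂ E :=
  AlgEquiv.ofLinearEquiv
    (LinearMap.toContinuousLinearMap (𝕜 := ℂ) (E := E) (F' := E)).symm rfl (fun _ _ => rfl)

end PolyVersion


open FinComplex in
/-- **Supersymmetric cancellation** (used in the proof of Propositions 4.1–4.2 of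
[BFK, "Relative torsion"]), finite-dimensional case `𝒜 = ℂ`: for any cochain complex of
finite-dimensional complex inner product spaces with Laplacians `Δ_q` and any continuous
`f : ℝ → ℝ`, `Σ_q (-1)^q Tr f(Δ_q) = f(0) Σ_q (-1)^q dim_ℂ C_q`, where `f(Δ_q)` is given
by the continuous functional calculus. -/
theorem alternating_trace_of_laplacians (N : ℕ) (X : FinComplex N)
    (f : ℝ → ℝ) (hf : Continuous f) :
    ∑ q ∈ Finset.range (N + 1), (-1 : ℂ) ^ q *
        LinearMap.trace ℂ (X.C q)
          ((cfc f (LinearMap.toContinuousLinearMap (X.lap q))).toLinearMap) =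
      (f 0 : ℂ) *
        ∑ q ∈ Finset.range (N + 1), (-1 : ℂ) ^ q * (Module.finrank ℂ (X.C q) : ℂ) := by
  classical
  set T : ∀ q, X.C q →L[ℂ] X.C q := fun q => LinearMap.toContinuousLinearMap (X.lap q) with hT
  have hsa : ∀ q, IsSelfAdjoint (T q) := by
    intro q
    rw [ContinuousLinearMap.isSelfAdjoint_iff_isSymmetric]
    have : ((T q : X.C q →L[ℂ] X.C q) : X.C q →ₗ[ℂ] X.C q) = X.lap q :=
      LinearMap.coe_toContinuousLinearMap _
    rw [this]
    exact X.lap_isSymmetric q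
  have hfin : ∀ q, (spectrum ℝ (T q)).Finite := by
    intro q
    have h1 : (spectrum ℂ (T q)).Finite := by
      rw [← AlgEquiv.spectrum_eq (clmAlgEquiv (X.C q)) (T q)]
      exact Module.End.finite_spectrum _
    rw [← spectrum.preimage_algebraMap (R := ℝ) (S := ℂ)]
    exact h1.preimage ((algebraMap ℝ ℂ).injective.injOn)
  set S : Finset ℝ :=
    insert 0 ((Finset.range (N + 1)).biUnion fun q => (hfin q).toFinset) with hS
  set p : Polynomial ℝ := Lagrange.interpolate S id f with hpdef
  have hp : ∀ x ∈ S, Polynomial.eval x p = f x := by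
    intro x hx
    exact Lagrange.eval_interpolate_at_node f (Set.injOn_id _) hx
  have hspec : ∀ q ∈ Finset.range (N + 1), spectrum ℝ (T q) ⊆ (S : Set ℝ) := by
    intro q hq x hx
    refine Finset.mem_insert_of_mem (Finset.mem_biUnion.mpr ⟨q, hq, ?_⟩)
    exact (hfin q).mem_toFinset.mpr hx
  have hcfc : ∀ q ∈ Finset.range (N + 1), cfc f (T q) = Polynomial.aeval (T q) p := by
    intro q hq
    have heq : (spectrum ℝ (T q)).EqOn f p.eval := fun x hx => (hp x (hspec q hq hx)).symm
    rw [cfc_congr heq, cfc_polynomial p (T q) (hsa q)]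
  have hf0 : f 0 = Polynomial.eval 0 p := (hp 0 (Finset.mem_insert_self 0 _)).symm
  calc ∑ q ∈ Finset.range (N + 1), (-1 : ℂ) ^ q *
        LinearMap.trace ℂ (X.C q) ((cfc f (T q)).toLinearMap)
      = ∑ q ∈ Finset.range (N + 1), (-1 : ℂ) ^ q *
          LinearMap.trace ℂ (X.C q) ((Polynomial.aeval (T q) p).toLinearMap) := by
        refine Finset.sum_congr rfl fun q hq => ?_
        rw [hcfc q hq]
    _ = ((Polynomial.eval 0 p : ℝ) : ℂ) *
          ∑ q ∈ Finset.range (N + 1), (-1 : ℂ) ^ q * (Module.finrank ℂ (X.C q) : ℂ) :=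
        alternating_trace_aeval X p
    _ = (f 0 : ℂ) * _ := by rw [hf0]
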